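/- Any set of primitive vectors in ℤ², considered up to sign, in which any two distinct elements v, w satisfy |det(v,w)| ≤ 1, has cardinality at most 3. -/
import Mathlib

private lemma exists_four_distinct {α : Type*} [DecidableEq α] (t : Finset α)
    (h : 4 ≤ t.card) :
    ∃ a b c d, a ∈ t ∧ b ∈ t ∧ c ∈ t ∧ d ∈ t ∧
      a ≠ b ∧ a ≠ c ∧ a ≠ d ∧ b ≠ c ∧ b ≠ d ∧ c ≠ d := by
  obtain ⟨a, ha⟩ := Finset.card_pos.mp (show 0 < t.card by omega)
  have h1 : 3 ≤ (t.erase a).card := by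
    have := Finset.card_erase_of_mem ha; omega
  obtain ⟨b, hb⟩ := Finset.card_pos.mp (by omega : 0 < (t.erase a).card)
  have h2 : 2 ≤ ((t.erase a).erase b).card := by
    have := Finset.card_erase_of_mem hb; omega
  obtain ⟨c, hc⟩ := Finset.card_pos.mp (by omega : 0 < ((t.erase a).erase b).card)
  have h3 : 1 ≤ (((t.erase a).erase b).erase c).card := by
    have := Finset.card_erase_of_mem hc; omega
  obtain ⟨d, hd⟩ := Finset.card_pos.mp (by omega : 0 < (((t.erase a).erase b).erase c).card)
  simp only [Finset.mem_erase] at hb hc hd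
  exact ⟨a, b, c, d, ha, hb.2, hc.2.2, hd.2.2.2,
    fun h => hb.1 h.symm, fun h => hc.2.1 h.symm, fun h => hd.2.2.1 h.symm,
    fun h => hc.1 h.symm, fun h => hd.2.1 h.symm, fun h => hd.1 h.symm⟩

/-- Any set of primitive vectors in `ℤ²`, considered up to sign, in which any
two distinct elements `v, w` satisfy `|det(v,w)| ≤ 1`, has at most 3 elements.
(This is `N(1,1) = 3` for 1-systems of curves on the torus.) -/
theorem torus_one_system_at_most_three (S : Set (ℤ × ℤ))
    (hprim : ∀ v ∈ S, IsCoprime v.1 v.2)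
    (hsign : ∀ v ∈ S, ∀ w ∈ S, v ≠ w → v ≠ -w)
    (hdet : ∀ v ∈ S, ∀ w ∈ S, v ≠ w → |v.1 * w.2 - v.2 * w.1| ≤ 1) :
    S.ncard ≤ 3 := by
  -- Step 1: any two distinct elements have determinant ±1.
  have hpm : ∀ v ∈ S, ∀ w ∈ S, v ≠ w →
      v.1 * w.2 - v.2 * w.1 = 1 ∨ v.1 * w.2 - v.2 * w.1 = -1 := by
    intro v hv w hw hvw
    have habs := abs_le.mp (hdet v hv w hw hvw)
    have hne : v.1 * w.2 - v.2 * w.1 ≠ 0 := by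
      intro h0
      obtain ⟨x, y, hxy⟩ := hprim v hv
      have hw1 : w.1 = v.1 * (x * w.1 + y * w.2) := by
        linear_combination (-w.1) * hxy + (-y) * h0
      have hw2 : w.2 = v.2 * (x * w.1 + y * w.2) := by
        linear_combination (-w.2) * hxy + x * h0
      have hku : IsUnit (x * w.1 + y * w.2) := by
        exact (hprim w hw).isUnit_of_dvd' ⟨v.1, by linarith⟩ ⟨v.2, by linarith⟩
      rcases Int.isUnit_iff.mp hku with h1 | h1 <;> rw [h1] at hw1 hw2
      · simp only [mul_one] at hw1 hw2
        exact hvw (Prod.ext hw1.symm hw2.symm)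
      · simp only [mul_neg_one] at hw1 hw2
        refine hsign v hv w hw hvw (Prod.ext ?_ ?_) <;>
          simp only [Prod.fst_neg, Prod.snd_neg] <;> omega
    omega
  -- Step 2: suppose the cardinality exceeds 3.
  by_contra hcon
  push_neg at hcon
  have hfin : S.Finite := by
    by_contra hinf
    rw [Set.Infinite.ncard hinf] at hcon; omega
  have hcard : 4 ≤ hfin.toFinset.card := by
    rw [Set.ncard_eq_toFinset_card S hfin] at hcon
    omega
  obtain ⟨a, b, c, d, ha, hb, hc, hd, hab, hac, had, hbc, hbd, hcd⟩ :=
    exists_four_distinct _ hcard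
  rw [Set.Finite.mem_toFinset] at ha hb hc hd
  -- Step 3: Plücker identity + parity contradiction.
  have e1 := hpm a ha b hb hab
  have e2 := hpm c hc d hd hcd
  have e3 := hpm a ha d hd had
  have e4 := hpm b hb c hc hbc
  have e5 := hpm a ha c hc hac
  have e6 := hpm b hb d hd hbd
  have key : (a.1 * b.2 - a.2 * b.1) * (c.1 * d.2 - c.2 * d.1)
      + (a.1 * d.2 - a.2 * d.1) * (b.1 * c.2 - b.2 * c.1)
      = (a.1 * c.2 - a.2 * c.1) * (b.1 * d.2 - b.2 * d.1) := by ring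
  have hmul : ∀ x y : ℤ, (x = 1 ∨ x = -1) → (y = 1 ∨ y = -1) →
      (x * y = 1 ∨ x * y = -1) := by
    rintro x y (rfl | rfl) (rfl | rfl) <;> norm_num
  have p1 := hmul _ _ e1 e2
  have p2 := hmul _ _ e3 e4
  have p3 := hmul _ _ e5 e6
  omega
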